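/- arXiv:2112.11666 — 2 statements merged into one kernel-verified Lean document; each statement's English description precedes it below -/
import Mathlib

section
/- For probability measures P, Q with densities p, q with respect to μ, and any 1 ≤ γ₁ ≤ γ₂, the generalized Hellinger distances satisfy the monotonicity D_{γ₂,H}(P,Q)^{γ₂} ≤ D_{γ₁,H}(P,Q)^{γ₁}. -/
/-!
For `s ∈ [0, 1]` the map `t ↦ t ^ s` is subadditive on `[0, ∞)`, hence `s`-Hölder:
`|a ^ s - b ^ s| ≤ |a - b| ^ s`. Applied to `a ^ (1 / γ₁)`, `b ^ (1 / γ₁)` with `s = γ₁ / γ₂`,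
this shows that the integrand `|a ^ (1 / γ) - b ^ (1 / γ)| ^ γ` is pointwise antitone in `γ`.
For `γ = 1` it is `|p - q|`, which dominates all the others and is integrable, so the
integrals are antitone too; and `D_{γ,H} ^ γ` is just half the integral.
-/

open MeasureTheory

noncomputable section

def hellingerIntegrand (γ a b : ℝ) : ℝ := |a ^ (1 / γ) - b ^ (1 / γ)| ^ γ

lemma abs_rpow_sub_rpow_le_abs_sub_rpow {a b s : ℝ} (ha : 0 ≤ a) (hb : 0 ≤ b)
    (hs0 : 0 ≤ s) (hs1 : s ≤ 1) : |a ^ s - b ^ s| ≤ |a - b| ^ s := by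
  wlog hba : b ≤ a generalizing a b
  · rw [abs_sub_comm, abs_sub_comm a]
    exact this hb ha (le_of_not_ge hba)
  rw [abs_of_nonneg (sub_nonneg.2 (Real.rpow_le_rpow hb hba hs0)),
    abs_of_nonneg (sub_nonneg.2 hba), sub_le_iff_le_add]
  calc a ^ s = ((a - b) + b) ^ s := by rw [sub_add_cancel]
    _ ≤ (a - b) ^ s + b ^ s := Real.rpow_add_le_add_rpow (sub_nonneg.2 hba) hb hs0 hs1

lemma hellingerIntegrand_nonneg (γ a b : ℝ) : 0 ≤ hellingerIntegrand γ a b :=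
  Real.rpow_nonneg (abs_nonneg _) _

lemma hellingerIntegrand_one (a b : ℝ) : hellingerIntegrand 1 a b = |a - b| := by
  simp [hellingerIntegrand]

lemma hellingerIntegrand_le_of_le {γ₁ γ₂ a b : ℝ} (ha : 0 ≤ a) (hb : 0 ≤ b)
    (hγ₁ : 0 < γ₁) (hγ : γ₁ ≤ γ₂) :
    hellingerIntegrand γ₂ a b ≤ hellingerIntegrand γ₁ a b := by
  have hγ₂ : 0 < γ₂ := hγ₁.trans_le hγ
  have root_eq : ∀ c : ℝ, 0 ≤ c → c ^ (1 / γ₂) = (c ^ (1 / γ₁)) ^ (γ₁ / γ₂) := fun c hc => by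
    rw [← Real.rpow_mul hc]
    field_simp
  unfold hellingerIntegrand
  rw [root_eq a ha, root_eq b hb]
  calc |(a ^ (1 / γ₁)) ^ (γ₁ / γ₂) - (b ^ (1 / γ₁)) ^ (γ₁ / γ₂)| ^ γ₂
      ≤ (|a ^ (1 / γ₁) - b ^ (1 / γ₁)| ^ (γ₁ / γ₂)) ^ γ₂ := by
        gcongr
        exact abs_rpow_sub_rpow_le_abs_sub_rpow (by positivity) (by positivity) (by positivity)
          ((div_le_one hγ₂).2 hγ)
    _ = |a ^ (1 / γ₁) - b ^ (1 / γ₁)| ^ γ₁ := by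
        rw [← Real.rpow_mul (abs_nonneg _), div_mul_cancel₀ _ hγ₂.ne']

lemma continuous_hellingerIntegrand {γ : ℝ} (hγ : 0 < γ) :
    Continuous fun ab : ℝ × ℝ => hellingerIntegrand γ ab.1 ab.2 := by
  unfold hellingerIntegrand
  fun_prop (disch := positivity)

lemma integrable_hellingerIntegrand {X : Type*} [MeasurableSpace X] {μ : Measure X}
    {p q : X → ℝ} (hp : Integrable p μ) (hq : Integrable q μ)
    (hp0 : 0 ≤ᵐ[μ] p) (hq0 : 0 ≤ᵐ[μ] q) {γ : ℝ} (hγ : 1 ≤ γ) :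
    Integrable (fun x => hellingerIntegrand γ (p x) (q x)) μ := by
  refine (hp.sub hq).abs.mono'
    ((continuous_hellingerIntegrand (by linarith)).comp_aestronglyMeasurable₂
      hp.aestronglyMeasurable hq.aestronglyMeasurable) ?_
  filter_upwards [hp0, hq0] with x hpx hqx
  rw [Real.norm_of_nonneg (hellingerIntegrand_nonneg _ _ _), Pi.sub_apply,
    ← hellingerIntegrand_one]
  exact hellingerIntegrand_le_of_le hpx hqx one_pos hγ

end

theorem generalizedHellinger_rpow_monotone_general
    {X : Type*} [MeasurableSpace X] (μ : Measure X)
    (p q : X → ℝ)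
    (hp0 : ∀ x, 0 ≤ p x) (hq0 : ∀ x, 0 ≤ q x)
    (hp1 : ∫ x, p x ∂μ = 1) (hq1 : ∫ x, q x ∂μ = 1)
    (γ₁ γ₂ : ℝ) (hγ₁ : 1 ≤ γ₁) (hγ : γ₁ ≤ γ₂) :
    (((1 / 2) * ∫ x, |p x ^ (1 / γ₂) - q x ^ (1 / γ₂)| ^ γ₂ ∂μ) ^ (1 / γ₂)) ^ γ₂
      ≤ (((1 / 2) * ∫ x, |p x ^ (1 / γ₁) - q x ^ (1 / γ₁)| ^ γ₁ ∂μ) ^ (1 / γ₁)) ^ γ₁ := by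
  change ((1 / 2 * ∫ x, hellingerIntegrand γ₂ (p x) (q x) ∂μ) ^ (1 / γ₂)) ^ γ₂
    ≤ ((1 / 2 * ∫ x, hellingerIntegrand γ₁ (p x) (q x) ∂μ) ^ (1 / γ₁)) ^ γ₁
  have half_integral_nonneg (γ : ℝ) : 0 ≤ 1 / 2 * ∫ x, hellingerIntegrand γ (p x) (q x) ∂μ :=
    mul_nonneg (by norm_num) (integral_nonneg fun x => hellingerIntegrand_nonneg _ _ _)
  rw [one_div γ₂, Real.rpow_inv_rpow (half_integral_nonneg γ₂) (by linarith),
    one_div γ₁, Real.rpow_inv_rpow (half_integral_nonneg γ₁) (by linarith)]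
  gcongr 1 / 2 * ?_
  exact integral_mono_of_nonneg (.of_forall fun x => hellingerIntegrand_nonneg _ _ _)
    (integrable_hellingerIntegrand (integrable_of_integral_eq_one hp1)
      (integrable_of_integral_eq_one hq1) (.of_forall hp0) (.of_forall hq0) hγ₁)
    (.of_forall fun x => hellingerIntegrand_le_of_le (hp0 x) (hq0 x) (by linarith) hγ)

/-- For probability measures with densities `p, q` with respect to `μ` and any
`1 ≤ γ₁ ≤ γ₂`, the generalized Hellinger distances satisfy the monotonicity
`D_{γ₂,H}(P,Q)^γ₂ ≤ D_{γ₁,H}(P,Q)^γ₁`, where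
`D_{γ,H}(P,Q) = ((1/2) ∫ |p^(1/γ) - q^(1/γ)|^γ dμ)^(1/γ)`. -/
theorem generalizedHellinger_rpow_monotone
    {X : Type*} [MeasurableSpace X] (μ : Measure X) [SigmaFinite μ]
    (p q : X → ℝ) (hpm : Measurable p) (hqm : Measurable q)
    (hp0 : ∀ x, 0 ≤ p x) (hq0 : ∀ x, 0 ≤ q x)
    (hp1 : ∫ x, p x ∂μ = 1) (hq1 : ∫ x, q x ∂μ = 1)
    (γ₁ γ₂ : ℝ) (hγ₁ : 1 ≤ γ₁) (hγ : γ₁ ≤ γ₂) :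
    (((1 / 2) * ∫ x, |p x ^ (1 / γ₂) - q x ^ (1 / γ₂)| ^ γ₂ ∂μ) ^ (1 / γ₂)) ^ γ₂
      ≤ (((1 / 2) * ∫ x, |p x ^ (1 / γ₁) - q x ^ (1 / γ₁)| ^ γ₁ ∂μ) ^ (1 / γ₁)) ^ γ₁ :=
  generalizedHellinger_rpow_monotone_general μ p q hp0 hq0 hp1 hq1 γ₁ γ₂ hγ₁ hγ
end

section
/- Suppose γ > 2 satisfies 2^k < γ ≤ 2^{k+1} for some positive integer k. Then the Hellinger distance is bounded as D_H(P,Q) ≤ 2^k D_{γ,H}(P,Q). -/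
open MeasureTheory

/-!
Write `u = p^{1/γ}`, `v = q^{1/γ}` and `m = max u v`. The mean value inequality for `t ↦ t^{γ/β}`
gives `|p^{1/β} - q^{1/β}|^β ≤ (γ/β)^β m^{γ-β} |u - v|^β` pointwise, and Hölder's inequality with
exponents `γ/(γ-β)` and `γ/β`, together with `∫ m^γ ≤ ∫ p + ∫ q = 2`, turns this into
`D_{β,H} ≤ (γ/β) D_{γ,H}` for all `0 < β < γ`. For `β = 2` and `2^k < γ ≤ 2^{k+1}` the constant
`γ/2` is at most `2^k`.
-/

lemma rpow_sub_rpow_le_mul_rpow_mul_sub {a b s : ℝ} (hb : 0 ≤ b) (hba : b ≤ a) (hs : 1 ≤ s) :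
    a ^ s - b ^ s ≤ s * a ^ (s - 1) * (a - b) := by
  rcases (hb.trans hba).eq_or_lt with ha | ha
  · obtain rfl : b = 0 := le_antisymm (ha ▸ hba) hb
    simp [← ha]
  · have hbern : 1 + s * (b / a - 1) ≤ b ^ s / a ^ s := by
      rw [← Real.div_rpow hb ha.le]
      simpa using one_add_mul_self_le_rpow_one_add (s := b / a - 1)
        (by linarith [div_nonneg hb ha.le]) hs
    rw [le_div_iff₀ (by positivity)] at hbern
    rw [Real.rpow_sub_one ha.ne']
    field_simp at hbern ⊢
    linarith

lemma abs_rpow_sub_rpow_le {a b s : ℝ} (ha : 0 ≤ a) (hb : 0 ≤ b) (hs : 1 ≤ s) :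
    |a ^ s - b ^ s| ≤ s * max a b ^ (s - 1) * |a - b| := by
  wlog hba : b ≤ a generalizing a b
  · rw [abs_sub_comm, max_comm, abs_sub_comm a]
    exact this hb ha (le_of_not_ge hba)
  rw [max_eq_left hba, abs_of_nonneg (sub_nonneg.2 (Real.rpow_le_rpow hb hba (by linarith))),
    abs_of_nonneg (sub_nonneg.2 hba)]
  exact rpow_sub_rpow_le_mul_rpow_mul_sub hb hba hs

lemma abs_rpow_inv_sub_rpow_inv_rpow_le {a b β γ : ℝ} (ha : 0 ≤ a) (hb : 0 ≤ b) (hβ : 0 < β)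
    (hβγ : β ≤ γ) :
    |a ^ (1 / β) - b ^ (1 / β)| ^ β ≤ (γ / β) ^ β *
      (max (a ^ (1 / γ)) (b ^ (1 / γ)) ^ (γ - β) * |a ^ (1 / γ) - b ^ (1 / γ)| ^ β) := by
  have hγ : 0 < γ := hβ.trans_le hβγ
  set u := a ^ (1 / γ)
  set v := b ^ (1 / γ)
  have hu : 0 ≤ u := by positivity
  have hv : 0 ≤ v := by positivity
  have hau : a ^ (1 / β) = u ^ (γ / β) := by
    rw [← Real.rpow_mul ha]; congr 1; field_simp
  have hbv : b ^ (1 / β) = v ^ (γ / β) := by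
    rw [← Real.rpow_mul hb]; congr 1; field_simp
  have hmax : (max u v ^ (γ / β - 1)) ^ β = max u v ^ (γ - β) := by
    rw [← Real.rpow_mul (le_max_of_le_left hu)]; congr 1; field_simp
  calc |a ^ (1 / β) - b ^ (1 / β)| ^ β = |u ^ (γ / β) - v ^ (γ / β)| ^ β := by rw [hau, hbv]
    _ ≤ (γ / β * max u v ^ (γ / β - 1) * |u - v|) ^ β :=
      Real.rpow_le_rpow (abs_nonneg _)
        (abs_rpow_sub_rpow_le hu hv ((one_le_div hβ).2 hβγ)) hβ.le
    _ = (γ / β) ^ β * (max u v ^ (γ - β) * |u - v| ^ β) := by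
      rw [Real.mul_rpow (by positivity) (abs_nonneg _), Real.mul_rpow (by positivity)
        (by positivity), hmax, mul_assoc]

lemma max_rpow_inv_rpow_le_add {a b γ : ℝ} (ha : 0 ≤ a) (hb : 0 ≤ b) (hγ : γ ≠ 0) :
    max (a ^ (1 / γ)) (b ^ (1 / γ)) ^ γ ≤ a + b := by
  rcases max_cases (a ^ (1 / γ)) (b ^ (1 / γ)) with ⟨h, -⟩ | ⟨h, -⟩ <;>
    rw [h, ← Real.rpow_mul (by assumption), one_div_mul_cancel hγ, Real.rpow_one] <;> linarith

lemma Real.holderConjugate_div_sub_div {β γ : ℝ} (hβ : 0 < β) (hβγ : β < γ) :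
    (γ / (γ - β)).HolderConjugate (γ / β) := by
  rw [Real.holderConjugate_iff, inv_div, inv_div, ← add_div, sub_add_cancel,
    div_self (hβ.trans hβγ).ne']
  exact ⟨(one_lt_div (sub_pos.2 hβγ)).2 (by linarith), rfl⟩

section RpowIntegrals

variable {X : Type*} [MeasurableSpace X] {μ : Measure X} {f g : X → ℝ} {β γ : ℝ}

lemma integrable_rpow_of_rpow_le (hg : Integrable g μ)
    (hfm : AEStronglyMeasurable f μ) (hf0 : 0 ≤ f) (hfg : ∀ x, f x ^ γ ≤ g x) :
    Integrable (fun x ↦ f x ^ γ) μ :=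
  hg.mono' (hfm.aemeasurable.pow_const γ).aestronglyMeasurable <| ae_of_all _ fun x ↦ by
    simpa only [Real.norm_of_nonneg (Real.rpow_nonneg (hf0 x) γ)] using hfg x

lemma memLp_rpow_of_integrable_rpow (hfm : AEStronglyMeasurable f μ) (hf0 : 0 ≤ f) {a b : ℝ}
    (hb : 0 < b) (hf : Integrable (fun x ↦ f x ^ (a * b)) μ) :
    MemLp (fun x ↦ f x ^ a) (ENNReal.ofReal b) μ := by
  rw [← integrable_norm_rpow_iff (hfm.aemeasurable.pow_const a).aestronglyMeasurable
    (ENNReal.ofReal_ne_zero_iff.2 hb) ENNReal.ofReal_ne_top, ENNReal.toReal_ofReal hb.le]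
  refine hf.congr (ae_of_all _ fun x ↦ ?_)
  simp only [Real.norm_of_nonneg (Real.rpow_nonneg (hf0 x) a), ← Real.rpow_mul (hf0 x)]

lemma memLp_rpow_div_of_integrable_rpow (hfm : AEStronglyMeasurable f μ) (hf0 : 0 ≤ f)
    (hβ : 0 < β) (hγ : 0 < γ) (hf : Integrable (fun x ↦ f x ^ γ) μ) :
    MemLp (fun x ↦ f x ^ β) (ENNReal.ofReal (γ / β)) μ :=
  memLp_rpow_of_integrable_rpow hfm hf0 (div_pos hγ hβ) (by rwa [mul_div_cancel₀ _ hβ.ne'])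

lemma integrable_rpow_mul_rpow (hfm : AEStronglyMeasurable f μ) (hgm : AEStronglyMeasurable g μ)
    (hf0 : 0 ≤ f) (hg0 : 0 ≤ g) (hβ : 0 < β) (hβγ : β < γ) (hf : Integrable (fun x ↦ f x ^ γ) μ)
    (hg : Integrable (fun x ↦ g x ^ γ) μ) :
    Integrable (fun x ↦ f x ^ (γ - β) * g x ^ β) μ := by
  have := (Real.holderConjugate_div_sub_div hβ hβγ).ennrealOfReal
  exact (memLp_rpow_div_of_integrable_rpow hfm hf0 (sub_pos.2 hβγ) (hβ.trans hβγ) hf).integrable_mul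
    (memLp_rpow_div_of_integrable_rpow hgm hg0 hβ (hβ.trans hβγ) hg)

lemma integral_rpow_mul_rpow_le (hfm : AEStronglyMeasurable f μ) (hgm : AEStronglyMeasurable g μ)
    (hf0 : 0 ≤ f) (hg0 : 0 ≤ g) (hβ : 0 < β) (hβγ : β < γ) (hf : Integrable (fun x ↦ f x ^ γ) μ)
    (hg : Integrable (fun x ↦ g x ^ γ) μ) :
    ∫ x, f x ^ (γ - β) * g x ^ β ∂μ ≤
      (∫ x, f x ^ γ ∂μ) ^ ((γ - β) / γ) * (∫ x, g x ^ γ ∂μ) ^ (β / γ) := by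
  have holder := integral_mul_le_Lp_mul_Lq_of_nonneg (Real.holderConjugate_div_sub_div hβ hβγ)
    (ae_of_all _ fun x ↦ Real.rpow_nonneg (hf0 x) _)
    (ae_of_all _ fun x ↦ Real.rpow_nonneg (hg0 x) _)
    (memLp_rpow_div_of_integrable_rpow hfm hf0 (sub_pos.2 hβγ) (hβ.trans hβγ) hf)
    (memLp_rpow_div_of_integrable_rpow hgm hg0 hβ (hβ.trans hβγ) hg)
  simpa only [← Real.rpow_mul (hf0 _), ← Real.rpow_mul (hg0 _), one_div_div,
    mul_div_cancel₀ _ hβ.ne', mul_div_cancel₀ _ (sub_pos.2 hβγ).ne'] using holder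

end RpowIntegrals

section Hellinger

variable {X : Type*} [MeasurableSpace X] {μ : Measure X} {p q : X → ℝ} {β γ : ℝ}

/-- `D_{γ,H}(P, Q)`; `generalizedHellinger μ p q 2` is the Hellinger distance `D_H(P, Q)`. -/
noncomputable def generalizedHellinger (μ : Measure X) (p q : X → ℝ) (γ : ℝ) : ℝ :=
  ((1 / 2) * ∫ x, |p x ^ (1 / γ) - q x ^ (1 / γ)| ^ γ ∂μ) ^ (1 / γ)

lemma generalizedHellinger_nonneg : 0 ≤ generalizedHellinger μ p q γ :=
  Real.rpow_nonneg (mul_nonneg (by norm_num) (integral_nonneg fun _ ↦ by positivity)) _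

lemma integral_abs_rpow_inv_sub_rpow_inv_rpow_le (hpm : AEStronglyMeasurable p μ)
    (hqm : AEStronglyMeasurable q μ) (hp0 : 0 ≤ p) (hq0 : 0 ≤ q) (hp1 : ∫ x, p x ∂μ = 1)
    (hq1 : ∫ x, q x ∂μ = 1) (hβ : 0 < β) (hβγ : β < γ) :
    ∫ x, |p x ^ (1 / β) - q x ^ (1 / β)| ^ β ∂μ ≤ (γ / β) ^ β *
      (2 ^ ((γ - β) / γ) * (∫ x, |p x ^ (1 / γ) - q x ^ (1 / γ)| ^ γ ∂μ) ^ (β / γ)) := by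
  have hγ : 0 < γ := hβ.trans hβγ
  have hp : Integrable p μ := .of_integral_ne_zero (by simp [hp1])
  have hq : Integrable q μ := .of_integral_ne_zero (by simp [hq1])
  have hpγ := (hpm.aemeasurable.pow_const (1 / γ)).aestronglyMeasurable
  have hqγ := (hqm.aemeasurable.pow_const (1 / γ)).aestronglyMeasurable
  set m := fun x ↦ max (p x ^ (1 / γ)) (q x ^ (1 / γ))
  set d := fun x ↦ |p x ^ (1 / γ) - q x ^ (1 / γ)|
  have hm0 : 0 ≤ m := fun x ↦ le_max_of_le_left (Real.rpow_nonneg (hp0 x) _)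
  have hd0 : 0 ≤ d := fun x ↦ abs_nonneg _
  have hmm : AEStronglyMeasurable m μ := hpγ.sup hqγ
  have hdm : AEStronglyMeasurable d μ := (hpγ.sub hqγ).norm
  have hmγ : ∀ x, m x ^ γ ≤ p x + q x := fun x ↦ max_rpow_inv_rpow_le_add (hp0 x) (hq0 x) hγ.ne'
  have hdγ : ∀ x, d x ^ γ ≤ p x + q x := fun x ↦ (Real.rpow_le_rpow (hd0 x)
    (abs_sub_le_of_nonneg_of_le (Real.rpow_nonneg (hp0 x) _) (le_max_left _ _)
      (Real.rpow_nonneg (hq0 x) _) (le_max_right _ _)) hγ.le).trans (hmγ x)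
  have hmInt := integrable_rpow_of_rpow_le (hp.add hq) hmm hm0 hmγ
  have hdInt := integrable_rpow_of_rpow_le (hp.add hq) hdm hd0 hdγ
  have hm2 : ∫ x, m x ^ γ ∂μ ≤ 2 := by
    refine (integral_mono hmInt (hp.add hq) hmγ).trans ?_
    rw [integral_add' hp hq, hp1, hq1]
    norm_num
  calc ∫ x, |p x ^ (1 / β) - q x ^ (1 / β)| ^ β ∂μ
      ≤ ∫ x, (γ / β) ^ β * (m x ^ (γ - β) * d x ^ β) ∂μ :=
        integral_mono_of_nonneg (ae_of_all _ fun x ↦ by positivity)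
          ((integrable_rpow_mul_rpow hmm hdm hm0 hd0 hβ hβγ hmInt hdInt).const_mul _)
          (ae_of_all _ fun x ↦ abs_rpow_inv_sub_rpow_inv_rpow_le (hp0 x) (hq0 x) hβ hβγ.le)
    _ = (γ / β) ^ β * ∫ x, m x ^ (γ - β) * d x ^ β ∂μ := integral_const_mul _ _
    _ ≤ (γ / β) ^ β * ((∫ x, m x ^ γ ∂μ) ^ ((γ - β) / γ) * (∫ x, d x ^ γ ∂μ) ^ (β / γ)) := by
        gcongr
        exact integral_rpow_mul_rpow_le hmm hdm hm0 hd0 hβ hβγ hmInt hdInt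
    _ ≤ (γ / β) ^ β * (2 ^ ((γ - β) / γ) * (∫ x, d x ^ γ ∂μ) ^ (β / γ)) := by
        gcongr
        exact integral_nonneg fun x ↦ Real.rpow_nonneg (hm0 x) γ

lemma generalizedHellinger_le_div_mul (hpm : AEStronglyMeasurable p μ)
    (hqm : AEStronglyMeasurable q μ) (hp0 : 0 ≤ p) (hq0 : 0 ≤ q) (hp1 : ∫ x, p x ∂μ = 1)
    (hq1 : ∫ x, q x ∂μ = 1) (hβ : 0 < β) (hβγ : β < γ) :
    generalizedHellinger μ p q β ≤ γ / β * generalizedHellinger μ p q γ := by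
  have hγ : 0 < γ := hβ.trans hβγ
  have hA := integral_abs_rpow_inv_sub_rpow_inv_rpow_le hpm hqm hp0 hq0 hp1 hq1 hβ hβγ
  unfold generalizedHellinger
  set A := ∫ x, |p x ^ (1 / β) - q x ^ (1 / β)| ^ β ∂μ
  set J := ∫ x, |p x ^ (1 / γ) - q x ^ (1 / γ)| ^ γ ∂μ
  have hA0 : 0 ≤ A := integral_nonneg fun _ ↦ by positivity
  have hJ0 : 0 ≤ J := integral_nonneg fun _ ↦ by positivity
  have htwo : (1 / 2 : ℝ) * 2 ^ ((γ - β) / γ) = (1 / 2) ^ (β / γ) := by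
    rw [sub_div, div_self hγ.ne', Real.rpow_sub two_pos, Real.rpow_one, Real.div_rpow zero_le_one
      zero_le_two, Real.one_rpow]
    ring
  rw [one_div β, Real.rpow_inv_le_iff_of_pos (by positivity) (by positivity) hβ]
  calc 1 / 2 * A ≤ 1 / 2 * ((γ / β) ^ β * (2 ^ ((γ - β) / γ) * J ^ (β / γ))) := by gcongr
    _ = (γ / β * ((1 / 2) * J) ^ (1 / γ)) ^ β := by
      rw [Real.mul_rpow (by positivity) (by positivity), ← Real.rpow_mul (by positivity),
        Real.mul_rpow (by positivity) hJ0, one_div_mul_eq_div γ β, ← htwo]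
      ring

end Hellinger

theorem hellinger_le_pow_two_mul_generalizedHellinger_general
    {X : Type*} [MeasurableSpace X] (μ : Measure X)
    (p q : X → ℝ) (hpm : Measurable p) (hqm : Measurable q)
    (hp0 : ∀ x, 0 ≤ p x) (hq0 : ∀ x, 0 ≤ q x)
    (hp1 : ∫ x, p x ∂μ = 1) (hq1 : ∫ x, q x ∂μ = 1)
    (γ : ℝ) (k : ℕ) (hk : 0 < k)
    (hγlow : (2 : ℝ) ^ k < γ) (hγhigh : γ ≤ (2 : ℝ) ^ (k + 1)) :
    ((1 / 2) * ∫ x, |p x ^ ((1 : ℝ) / 2) - q x ^ ((1 : ℝ) / 2)| ^ (2 : ℝ) ∂μ) ^ ((1 : ℝ) / 2)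
      ≤ (2 : ℝ) ^ k *
        ((1 / 2) * ∫ x, |p x ^ (1 / γ) - q x ^ (1 / γ)| ^ γ ∂μ) ^ (1 / γ) := by
  have hγ : 2 < γ := (le_self_pow₀ one_le_two hk.ne').trans_lt hγlow
  have hγk : γ / 2 ≤ 2 ^ k := by rw [pow_succ] at hγhigh; linarith
  calc generalizedHellinger μ p q 2
      ≤ γ / 2 * generalizedHellinger μ p q γ :=
        generalizedHellinger_le_div_mul hpm.aestronglyMeasurable hqm.aestronglyMeasurable hp0 hq0
          hp1 hq1 two_pos hγ
    _ ≤ 2 ^ k * generalizedHellinger μ p q γ := by gcongr; exact generalizedHellinger_nonneg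

/-- Suppose `γ > 2` satisfies `2^k < γ ≤ 2^(k+1)` for some positive integer `k`.
Then the Hellinger distance is bounded as `D_H(P,Q) ≤ 2^k * D_{γ,H}(P,Q)`, where
`D_{γ,H}(P,Q) = ((1/2) ∫ |p^(1/γ) - q^(1/γ)|^γ dμ)^(1/γ)` and `D_H = D_{2,H}`. -/
theorem hellinger_le_pow_two_mul_generalizedHellinger
    {X : Type*} [MeasurableSpace X] (μ : Measure X) [SigmaFinite μ]
    (p q : X → ℝ) (hpm : Measurable p) (hqm : Measurable q)
    (hp0 : ∀ x, 0 ≤ p x) (hq0 : ∀ x, 0 ≤ q x)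
    (hp1 : ∫ x, p x ∂μ = 1) (hq1 : ∫ x, q x ∂μ = 1)
    (γ : ℝ) (k : ℕ) (hk : 0 < k)
    (hγlow : (2 : ℝ) ^ k < γ) (hγhigh : γ ≤ (2 : ℝ) ^ (k + 1)) :
    ((1 / 2) * ∫ x, |p x ^ ((1 : ℝ) / 2) - q x ^ ((1 : ℝ) / 2)| ^ (2 : ℝ) ∂μ) ^ ((1 : ℝ) / 2)
      ≤ (2 : ℝ) ^ k *
        ((1 / 2) * ∫ x, |p x ^ (1 / γ) - q x ^ (1 / γ)| ^ γ ∂μ) ^ (1 / γ) :=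
  hellinger_le_pow_two_mul_generalizedHellinger_general μ p q hpm hqm hp0 hq0 hp1 hq1 γ k hk hγlow
    hγhigh
end
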